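/- For the neutral Moran process on a population of size N and 1 ≤ i ≤ N-1, the mean conditional fixation time at state N starting from i equals t_i^N = (N(N-i)/i)[N(H_{N-1} - H_{N-i}) + 1]. -/

import Mathlib

open Real Finset

noncomputable def H (n : ℕ) : ℝ := ∑ i ∈ Finset.Icc 1 n, (1 : ℝ) / i

/-!
In the neutral process `π_n / α_n = N / (N - n)`, so the inner sum over `n ≤ k` is the harmonic
tail `N (H_{N-1} - H_{N-1-k})`. Summing these over `i ≤ k ≤ N - 1` and reflecting `k ↦ N - 1 - k`
reduces everything to the identity `∑_{j < d} H_j = d H_d - d`; the correction term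
`-(1 - π_i)/π_i · N(N-1)` then only turns the leftover `N` into the `+1`.
-/

lemma H_succ (n : ℕ) : H (n + 1) = H n + 1 / ((n : ℝ) + 1) := by
  rw [H, sum_Icc_succ_top (by omega), ← H]
  push_cast
  rfl

lemma sum_range_H (d : ℕ) : ∑ j ∈ range d, H j = d * H d - d := by
  induction d with
  | zero => simp
  | succ d ih =>
    rw [sum_range_succ, ih, H_succ]
    push_cast
    field_simp
    ring

lemma div_div_mul_sub_div_sq {K : Type*} [Field K] {x y : K} (hx : x ≠ 0) (hy : y ≠ 0) :
    x / y / (x * (y - x) / y ^ 2) = y / (y - x) := by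
  rcases eq_or_ne (y - x) 0 with hxy | hxy
  · simp [hxy]
  · field_simp

lemma sum_Icc_one_div_sub (N k : ℕ) (hk : k < N) :
    ∑ n ∈ Icc 1 k, 1 / ((N : ℝ) - n) = H (N - 1) - H (N - 1 - k) := by
  induction k with
  | zero => simp
  | succ k ih =>
    have hsplit : N - 1 - k = (N - 1 - (k + 1)) + 1 := by omega
    have hcast : ((N - 1 - (k + 1) : ℕ) : ℝ) + 1 = N - (k + 1) := by
      rw [Nat.cast_sub (by omega), Nat.cast_sub (by omega)]
      push_cast
      ring
    rw [sum_Icc_succ_top (by omega), ih (by omega), hsplit, H_succ, hcast]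
    push_cast
    ring

lemma sum_Icc_H_sub (N i : ℕ) (hi : i ≤ N) (hN : 1 ≤ N) :
    ∑ k ∈ Icc i (N - 1), (H (N - 1) - H (N - 1 - k))
      = ((N : ℝ) - i) * (H (N - 1) - H (N - i) + 1) := by
  have hreflect : ∑ k ∈ Icc i (N - 1), H (N - 1 - k) = ∑ j ∈ range (N - i), H j := by
    rw [← Ico_add_one_right_eq_Icc, Nat.sub_one_add_one_eq_of_pos hN,
      sum_Ico_reflect H i (by omega), Nat.sub_add_cancel hN, Nat.sub_self, Nat.Ico_zero_eq_range]
  rw [sum_sub_distrib, hreflect, sum_range_H, sum_const, Nat.card_Icc, nsmul_eq_mul,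
    Nat.cast_sub hi, show N - 1 + 1 - i = N - i by omega, Nat.cast_sub hi]
  ring

theorem neutral_tiN (N i : ℕ) (hi1 : 1 ≤ i) (hiN : i ≤ N - 1) :
    (1 / ((i : ℝ) / N)) *
        (∑ k ∈ Finset.Icc i (N - 1), ∑ n ∈ Finset.Icc 1 k,
          ((n : ℝ) / N) / (((n : ℝ) * ((N : ℝ) - n)) / (N : ℝ) ^ 2))
      - ((1 - (i : ℝ) / N) / ((i : ℝ) / N)) * (N * ((N : ℝ) - 1))
      = ((N : ℝ) * ((N : ℝ) - i) / i) * ((N : ℝ) * (H (N - 1) - H (N - i)) + 1) := by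
  have hN0 : (N : ℝ) ≠ 0 := Nat.cast_ne_zero.mpr (by omega)
  have hi0 : (i : ℝ) ≠ 0 := Nat.cast_ne_zero.mpr (by omega)
  have hinner : ∀ k ∈ Icc i (N - 1), ∑ n ∈ Icc 1 k,
      ((n : ℝ) / N) / (((n : ℝ) * ((N : ℝ) - n)) / (N : ℝ) ^ 2)
        = N * (H (N - 1) - H (N - 1 - k)) := by
    intro k hk
    rw [← sum_Icc_one_div_sub N k (by grind), mul_sum]
    refine sum_congr rfl fun n hn => ?_
    rw [div_div_mul_sub_div_sq (Nat.cast_ne_zero.mpr (by grind)) hN0, mul_one_div]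
  rw [sum_congr rfl hinner, ← mul_sum, sum_Icc_H_sub N i (by omega) (by omega)]
  field_simp
  ring
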